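/- Let K be a field complete with respect to a non-discrete rank-1 valuation w, and let R be its valuation ring. Then the formal power series ring R[[X]] is not a generalized Krull domain: there is no family ℱ of rank-1 valuations of Quot(R[[X]]) satisfying the generalized Krull conditions for R[[X]]. -/

import Mathlib

open PowerSeries Filter Set

/-- An additive rank-1 (real-valued) non-archimedean valuation on a field `K`,
with values in `EReal` (real numbers on nonzero elements, `⊤` at `0`). -/
structure AddRealValuation (K : Type*) [Field K] where
  w : K → EReal
  map_zero' : w 0 = ⊤
  finite' : ∀ x : K, x ≠ 0 → ∃ r : ℝ, w x = (r : EReal)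
  map_one' : w 1 = 0
  map_mul' : ∀ x y : K, w (x * y) = w x + w y
  map_neg' : ∀ x : K, w (-x) = w x
  add_le' : ∀ x y : K, min (w x) (w y) ≤ w (x + y)

namespace AddRealValuation

variable {K : Type*} [Field K] (v : AddRealValuation K)

/-- The valuation is non-discrete: there exist elements of arbitrarily
small positive valuation. -/
def Nondiscrete : Prop := ∀ ε : ℝ, 0 < ε → ∃ x : K, 0 < v.w x ∧ v.w x < (ε : EReal)

/-- `K` is complete with respect to `v`: every Cauchy sequence converges. -/
def IsComplete : Prop :=
  ∀ u : ℕ → K, (∀ M : ℝ, ∃ N : ℕ, ∀ m ≥ N, ∀ n ≥ N, (M : EReal) ≤ v.w (u m - u n)) →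
    ∃ L : K, ∀ M : ℝ, ∃ N : ℕ, ∀ n ≥ N, (M : EReal) ≤ v.w (u n - L)

/-- The valuation ring `R = {x : K | w x ≥ 0}` of `v`. -/
def subring : Subring K where
  carrier := {x | 0 ≤ v.w x}
  zero_mem' := by show (0:EReal) ≤ v.w 0; rw [v.map_zero']; exact le_top
  one_mem' := by show (0:EReal) ≤ v.w 1; rw [v.map_one']
  add_mem' := fun hx hy => le_trans (le_min hx hy) (v.add_le' _ _)
  mul_mem' := fun hx hy => by
    show (0:EReal) ≤ v.w _; rw [v.map_mul']; exact add_nonneg hx hy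
  neg_mem' := fun {x} hx => by show (0:EReal) ≤ v.w (-x); rw [v.map_neg']; exact hx

/-- The extension of `v` to power series over `K`: the infimum of the
valuations of the coefficients. -/
noncomputable def wS (f : PowerSeries K) : EReal := ⨅ i : ℕ, v.w (PowerSeries.coeff i f)

/-- The extension of `v` to power series over the valuation ring `R` of `v`. -/
noncomputable def wR (f : PowerSeries v.subring) : EReal :=
  ⨅ i : ℕ, v.w ((PowerSeries.coeff i f : v.subring) : K)

/-- `f` is a convergent power series (lies in the Tate algebra `K{X}`):
the valuations of the coefficients tend to `∞`. -/
def Conv (f : PowerSeries K) : Prop :=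
  ∀ M : ℝ, ∃ N : ℕ, ∀ i ≥ N, (M : EReal) ≤ v.w (PowerSeries.coeff i f)

/-- The series `f(c) = Σ fᵢ cⁱ` (with `f` over the valuation ring `R`) converges to `0`:
the valuations of the partial sums tend to `∞`. -/
def EvalZeroR (f : PowerSeries v.subring) (c : v.subring) : Prop :=
  ∀ M : ℝ, ∃ N : ℕ, ∀ n ≥ N,
    (M : EReal) ≤ v.w ((∑ i ∈ Finset.range n, PowerSeries.coeff i f * c ^ i : v.subring) : K)

end AddRealValuation

/-- `𝓕` is a defining family of rank-1 valuations exhibiting the domain `D`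
(with fraction field `F`) as a generalized Krull domain:
(a) for each `v ∈ 𝓕` the valuation ring of `v` is the localization of `D`
at the prime `{a : v a > 0}`; (b) `⋂ D_v = D`; (c) each nonzero `a ∈ D`
satisfies `v a = 0` for all but finitely many `v ∈ 𝓕`. -/
def IsGKFamily (D : Type*) [CommRing D] [IsDomain D] (F : Type*) [Field F]
    [Algebra D F] [IsFractionRing D F] (𝓕 : Set (AddRealValuation F)) : Prop :=
  (∀ u ∈ 𝓕, ∀ x : F, 0 ≤ u.w x ↔
    ∃ a b : D, b ≠ 0 ∧ ¬ 0 < u.w (algebraMap D F b) ∧ x * algebraMap D F b = algebraMap D F a) ∧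
  (∀ x : F, (∀ u ∈ 𝓕, 0 ≤ u.w x) → ∃ a : D, x = algebraMap D F a) ∧
  (∀ a : D, a ≠ 0 → {u ∈ 𝓕 | u.w (algebraMap D F a) ≠ 0}.Finite)

/-!
In a generalized Krull domain every nonzero nonunit `π` has some `u ∈ 𝓕` with `u π > 0`, and
because the valuations have rank one, two primes that are positive for the same `u` divide each
other. By condition (c), a nonzero element therefore has only finitely many prime divisors up to
association.

In `R⟦X⟧`, `X - c` is prime for every `c` of positive valuation: division with remainder by
`X - c` exists by completeness, the remainder being the value `f(c)`. Since `w` is not discrete,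
there are elements of valuations `ε n` with `ε (n + 1) ≤ ε n / 2`, and from them a series whose
Newton polygon has a side of slope `-ε (n + 1)` for each `n`. A contraction argument turns each
side into a root `cₙ`, so this series has the infinitely many non-associated prime divisors
`X - cₙ`.
-/

namespace PowerSeries

variable {A : Type*} [CommRing A] (c r : A) (q : PowerSeries A)

theorem coeff_zero_X_sub_C_mul_add_C : coeff 0 ((X - C c) * q + C r) = r - c * coeff 0 q := by
  simp [sub_mul, neg_add_eq_sub]

theorem coeff_succ_X_sub_C_mul_add_C (i : ℕ) :
    coeff (i + 1) ((X - C c) * q + C r) = coeff i q - c * coeff (i + 1) q := by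
  rw [map_add, coeff_succ_C, add_zero, sub_mul, map_sub, coeff_succ_X_mul, coeff_C_mul]

theorem sum_coeff_X_sub_C_mul_add_C_mul_pow (N : ℕ) :
    ∑ i ∈ Finset.range (N + 1), coeff i ((X - C c) * q + C r) * c ^ i
      = r - coeff N q * c ^ (N + 1) := by
  induction N with
  | zero =>
    rw [zero_add, Finset.sum_range_one, coeff_zero_X_sub_C_mul_add_C]
    ring
  | succ N ih =>
    rw [Finset.sum_range_succ, ih, coeff_succ_X_sub_C_mul_add_C]
    ring

end PowerSeries

theorem exists_nat_forall_le_add_mul {ρ Δ : ℝ} (hΔ : 0 < Δ) (M : ℝ) :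
    ∃ N : ℕ, ∀ m ≥ N, M ≤ ρ + m * Δ := by
  obtain ⟨N, hN⟩ := exists_nat_ge ((M - ρ) / Δ)
  rw [div_le_iff₀ hΔ] at hN
  exact ⟨N, fun m hm => by nlinarith [(Nat.cast_le (α := ℝ)).mpr hm]⟩

namespace AddRealValuation

variable {K : Type*} [Field K] {v : AddRealValuation K}

section Arithmetic

theorem w_neg (x : K) : v.w (-x) = v.w x := v.map_neg' x

theorem w_sub_comm (x y : K) : v.w (x - y) = v.w (y - x) := by
  rw [← neg_sub, w_neg]

variable {x y : K}

theorem le_w_add {B : EReal} (hx : B ≤ v.w x) (hy : B ≤ v.w y) : B ≤ v.w (x + y) :=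
  (le_min hx hy).trans (v.add_le' x y)

theorem le_w_sub {B : EReal} (hx : B ≤ v.w x) (hy : B ≤ v.w y) : B ≤ v.w (x - y) := by
  rw [sub_eq_add_neg]
  exact le_w_add hx (by rwa [w_neg])

theorem le_w_sum {ι : Type*} {s : Finset ι} {f : ι → K} {B : EReal}
    (h : ∀ i ∈ s, B ≤ v.w (f i)) : B ≤ v.w (∑ i ∈ s, f i) := by
  classical
  induction s using Finset.induction_on with
  | empty => simp [v.map_zero']
  | insert a s ha ih =>
    rw [Finset.sum_insert ha]
    exact le_w_add (h a (s.mem_insert_self a)) (ih fun i hi => h i (Finset.mem_insert_of_mem hi))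

theorem w_add_eq_of_lt (h : v.w x < v.w y) : v.w (x + y) = v.w x := by
  refine le_antisymm (not_lt.mp fun hlt => ?_) (le_w_add le_rfl h.le)
  have := le_w_sub (min_le_left (v.w (x + y)) (v.w y)) (min_le_right _ _)
  rw [add_sub_cancel_right] at this
  exact (lt_min hlt h).not_ge this

theorem coe_le_w_mul {r s : ℝ} (hx : (r : EReal) ≤ v.w x) (hy : (s : EReal) ≤ v.w y) :
    ((r + s : ℝ) : EReal) ≤ v.w (x * y) := by
  rw [v.map_mul', EReal.coe_add]
  exact add_le_add hx hy

theorem w_mul_eq {r s : ℝ} (hx : v.w x = r) (hy : v.w y = s) : v.w (x * y) = (r + s : ℝ) := by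
  rw [v.map_mul', hx, hy, EReal.coe_add]

theorem w_pow_eq {r : ℝ} (hx : v.w x = r) (k : ℕ) : v.w (x ^ k) = (k * r : ℝ) := by
  induction k with
  | zero => simp [v.map_one']
  | succ k ih => rw [pow_succ, w_mul_eq ih hx]; congr 1; push_cast; ring

theorem ne_zero_of_w_eq {r : ℝ} (hx : v.w x = r) : x ≠ 0 := by
  rintro rfl
  exact EReal.coe_ne_top r (hx.symm.trans v.map_zero')

theorem w_inv_eq {r : ℝ} (hx : v.w x = r) : v.w x⁻¹ = (-r : ℝ) := by
  have hx0 := ne_zero_of_w_eq hx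
  obtain ⟨s, hs⟩ := v.finite' x⁻¹ (inv_ne_zero hx0)
  have h1 := w_mul_eq hx hs
  rw [mul_inv_cancel₀ hx0, v.map_one', ← EReal.coe_zero, EReal.coe_eq_coe_iff] at h1
  rw [hs, show s = -r by linarith]

theorem coe_le_w_div {r s : ℝ} (hx : (r : EReal) ≤ v.w x) (hy : v.w y = s) :
    ((r - s : ℝ) : EReal) ≤ v.w (x / y) := by
  rw [div_eq_mul_inv, sub_eq_add_neg]
  exact coe_le_w_mul hx (w_inv_eq hy).ge

theorem w_div_eq {r s : ℝ} (hx : v.w x = r) (hy : v.w y = s) : v.w (x / y) = (r - s : ℝ) := by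
  rw [div_eq_mul_inv, w_mul_eq hx (w_inv_eq hy), sub_eq_add_neg]

theorem coe_le_w_pow {r : ℝ} (hx : (r : EReal) ≤ v.w x) (k : ℕ) :
    ((k * r : ℝ) : EReal) ≤ v.w (x ^ k) := by
  induction k with
  | zero => simp [v.map_one']
  | succ k ih => simpa [pow_succ, add_mul] using coe_le_w_mul ih hx

theorem w_prod_eq {ι : Type*} {s : Finset ι} {f : ι → K} {r : ι → ℝ}
    (h : ∀ i ∈ s, v.w (f i) = r i) : v.w (∏ i ∈ s, f i) = (∑ i ∈ s, r i : ℝ) := by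
  classical
  induction s using Finset.induction_on with
  | empty => simp [v.map_one']
  | insert a s ha ih =>
    rw [Finset.prod_insert ha, Finset.sum_insert ha]
    exact w_mul_eq (h a (s.mem_insert_self a)) (ih fun i hi => h i (Finset.mem_insert_of_mem hi))

theorem eq_zero_of_forall_coe_le_w (h : ∀ M : ℝ, (M : EReal) ≤ v.w x) : x = 0 := by
  by_contra hx
  obtain ⟨r, hr⟩ := v.finite' x hx
  have := h (r + 1)
  rw [hr, EReal.coe_le_coe_iff] at this
  linarith

theorem eq_zero_of_forall_nat_coe_le_w {ρ Δ : ℝ} (hΔ : 0 < Δ)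
    (h : ∀ m : ℕ, ((ρ + m * Δ : ℝ) : EReal) ≤ v.w x) : x = 0 := by
  refine eq_zero_of_forall_coe_le_w (v := v) fun M => ?_
  obtain ⟨N, hN⟩ := exists_nat_forall_le_add_mul (ρ := ρ) hΔ M
  exact (EReal.coe_le_coe_iff.mpr (hN N le_rfl)).trans (h N)

theorem w_eq_of_lt_w_sub {r : ℝ} (hy : v.w y = r) (h : (r : EReal) < v.w (x - y)) :
    v.w x = r := by
  rw [← hy, ← w_add_eq_of_lt (hy ▸ h : v.w y < v.w (x - y)), add_sub_cancel]

theorem w_zpow_eq {x : K} {r : ℝ} (hx : v.w x = r) (m : ℤ) : v.w (x ^ m) = (m * r : ℝ) := by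
  rcases m with j | j
  · simpa using w_pow_eq hx j
  · rw [zpow_negSucc, w_inv_eq (w_pow_eq hx (j + 1)), Int.cast_negSucc]
    congr 1
    push_cast
    ring

theorem coe_le_w_zpow_sub_zpow {x y : K} {θ r : ℝ} (hx : v.w x = θ) (hy : v.w y = θ)
    (h : (r : EReal) ≤ v.w (x - y)) (m : ℤ) :
    ((r + (m - 1) * θ : ℝ) : EReal) ≤ v.w (x ^ m - y ^ m) := by
  have hpow : ∀ j : ℕ, ((r + (j - 1) * θ : ℝ) : EReal) ≤ v.w (x ^ j - y ^ j) := by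
    rintro (_ | j)
    · simp [v.map_zero']
    rw [← geom_sum₂_mul]
    have hsum : ((j * θ : ℝ) : EReal) ≤
        v.w (∑ i ∈ Finset.range (j + 1), x ^ i * y ^ (j + 1 - 1 - i)) := by
      refine le_w_sum fun i hi => le_of_eq ?_
      rw [w_mul_eq (w_pow_eq hx i) (w_pow_eq hy _), Nat.add_sub_cancel,
        Nat.cast_sub (Nat.lt_succ_iff.mp (Finset.mem_range.mp hi))]
      ring_nf
    convert coe_le_w_mul hsum h using 2
    push_cast
    ring
  rcases m with j | j
  · simpa using hpow j
  · have hx0 := ne_zero_of_w_eq (w_pow_eq hx (j + 1))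
    have hy0 := ne_zero_of_w_eq (w_pow_eq hy (j + 1))
    rw [zpow_negSucc, zpow_negSucc, inv_sub_inv hx0 hy0,
      show y ^ (j + 1) - x ^ (j + 1) = -(x ^ (j + 1) - y ^ (j + 1)) by ring, neg_div, w_neg]
    convert coe_le_w_div (hpow (j + 1)) (w_mul_eq (w_pow_eq hx (j + 1)) (w_pow_eq hy (j + 1)))
      using 2
    push_cast
    ring

end Arithmetic

variable (v) in
def HasLimit (u : ℕ → K) (L : K) : Prop :=
  ∀ M : ℝ, ∃ N : ℕ, ∀ n ≥ N, (M : EReal) ≤ v.w (u n - L)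

variable (v) in
def SumsTo (a : ℕ → K) (s : K) : Prop :=
  v.HasLimit (fun N => ∑ k ∈ Finset.range N, a k) s

section Limits

variable {u u' : ℕ → K} {L L' : K}

theorem HasLimit.coe_le_w {B : ℝ} {N : ℕ} (h : v.HasLimit u L)
    (hB : ∀ n ≥ N, (B : EReal) ≤ v.w (u n)) : (B : EReal) ≤ v.w L := by
  obtain ⟨N', hN'⟩ := h B
  have hn := le_max_left N N'
  simpa using le_w_sub (hB _ hn) (hN' _ (le_max_right N N'))

theorem HasLimit.unique (h : v.HasLimit u L) (h' : v.HasLimit u L') : L = L' := by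
  refine sub_eq_zero.mp (eq_zero_of_forall_coe_le_w (v := v) fun M => ?_)
  obtain ⟨N, hN⟩ := h M
  obtain ⟨N', hN'⟩ := h' M
  have hn := le_max_left N N'
  simpa using le_w_sub (hN' _ (le_max_right N N')) (hN _ hn)

theorem HasLimit.add (h : v.HasLimit u L) (h' : v.HasLimit u' L') :
    v.HasLimit (fun n => u n + u' n) (L + L') := fun M => by
  obtain ⟨N, hN⟩ := h M
  obtain ⟨N', hN'⟩ := h' M
  refine ⟨max N N', fun n hn => ?_⟩
  rw [add_sub_add_comm]
  exact le_w_add (hN n (le_of_max_le_left hn)) (hN' n (le_of_max_le_right hn))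

theorem HasLimit.sub (h : v.HasLimit u L) (h' : v.HasLimit u' L') :
    v.HasLimit (fun n => u n - u' n) (L - L') := fun M => by
  obtain ⟨N, hN⟩ := h M
  obtain ⟨N', hN'⟩ := h' M
  refine ⟨max N N', fun n hn => ?_⟩
  rw [sub_sub_sub_comm]
  exact le_w_sub (hN n (le_of_max_le_left hn)) (hN' n (le_of_max_le_right hn))

theorem HasLimit.const_mul (c : K) (h : v.HasLimit u L) :
    v.HasLimit (fun n => c * u n) (c * L) := by
  rcases eq_or_ne c 0 with rfl | hc
  · exact fun M => ⟨0, fun n _ => by simp [v.map_zero']⟩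
  obtain ⟨r, hr⟩ := v.finite' c hc
  intro M
  obtain ⟨N, hN⟩ := h (M - r)
  refine ⟨N, fun n hn => ?_⟩
  rw [← mul_sub]
  simpa using coe_le_w_mul hr.ge (hN n hn)

theorem hasLimit_of_eventually_eq {N : ℕ} (h : ∀ n ≥ N, u n = L) : v.HasLimit u L :=
  fun _ => ⟨N, fun n hn => by simp [h n hn, v.map_zero']⟩

theorem hasLimit_of_coe_le_w {ρ Δ : ℝ} (hΔ : 0 < Δ)
    (h : ∀ m : ℕ, ((ρ + m * Δ : ℝ) : EReal) ≤ v.w (u m - L)) : v.HasLimit u L := by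
  intro M
  obtain ⟨N, hN⟩ := exists_nat_forall_le_add_mul (ρ := ρ) hΔ M
  exact ⟨N, fun n hn => (EReal.coe_le_coe_iff.mpr (hN n hn)).trans (h n)⟩

theorem exists_hasLimit (hcomp : v.IsComplete) {ρ Δ : ℝ} (hΔ : 0 < Δ)
    (h : ∀ m : ℕ, ((ρ + m * Δ : ℝ) : EReal) ≤ v.w (u (m + 1) - u m)) :
    ∃ L, v.HasLimit u L ∧ ∀ m : ℕ, ((ρ + m * Δ : ℝ) : EReal) ≤ v.w (u m - L) := by
  have hcauchy : ∀ m m' : ℕ, m ≤ m' → ((ρ + m * Δ : ℝ) : EReal) ≤ v.w (u m' - u m) := by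
    intro m m' hmm'
    induction m', hmm' using Nat.le_induction with
    | base => simp [v.map_zero']
    | succ m' hmm' ih =>
      rw [← sub_add_sub_cancel (u (m' + 1)) (u m') (u m)]
      refine le_w_add ((EReal.coe_le_coe_iff.mpr ?_).trans (h m')) ih
      nlinarith [(Nat.cast_le (α := ℝ)).mpr hmm']
  obtain ⟨L, hL⟩ : ∃ L, v.HasLimit u L := hcomp u fun M => by
    obtain ⟨N, hN⟩ := exists_nat_forall_le_add_mul (ρ := ρ) hΔ M
    refine ⟨N, fun m hm m' hm' => ?_⟩
    rcases le_total m m' with hmm' | hmm'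
    · rw [w_sub_comm]
      exact (EReal.coe_le_coe_iff.mpr (hN m hm)).trans (hcauchy m m' hmm')
    · exact (EReal.coe_le_coe_iff.mpr (hN m' hm')).trans (hcauchy m' m hmm')
  refine ⟨L, hL, fun m => ?_⟩
  rw [w_sub_comm]
  exact (hL.sub (hasLimit_of_eventually_eq (N := 0) fun _ _ => rfl)).coe_le_w
    (N := m) fun m' hm' => hcauchy m m' hm'

theorem exists_fixedPoint (hcomp : v.IsComplete) {T : K → K} {c₀ : K} {ρ Δ : ℝ} (hΔ : 0 < Δ)
    (hmaps : ∀ c, (ρ : EReal) ≤ v.w (c - c₀) → (ρ : EReal) ≤ v.w (T c - c₀))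
    (hcontr : ∀ c c' (r : ℝ), (ρ : EReal) ≤ v.w (c - c₀) → (ρ : EReal) ≤ v.w (c' - c₀) →
      (r : EReal) ≤ v.w (c - c') → ((r + Δ : ℝ) : EReal) ≤ v.w (T c - T c')) :
    ∃ c, (ρ : EReal) ≤ v.w (c - c₀) ∧ T c = c := by
  set u : ℕ → K := fun m => T^[m] c₀ with hu
  have hu_succ : ∀ m, u (m + 1) = T (u m) := fun m => Function.iterate_succ_apply' T m c₀
  have hball : ∀ m, (ρ : EReal) ≤ v.w (u m - c₀) := by
    intro m
    induction m with
    | zero => simp [u, v.map_zero']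
    | succ m ih => rw [hu_succ]; exact hmaps _ ih
  have hstep : ∀ m : ℕ, ((ρ + m * Δ : ℝ) : EReal) ≤ v.w (u (m + 1) - u m) := by
    intro m
    induction m with
    | zero => simpa [u] using hmaps c₀ (by simp [v.map_zero'])
    | succ m ih =>
      rw [hu_succ (m + 1)]
      convert hcontr _ _ _ (hball (m + 1)) (hball m) ih using 2
      · push_cast
        ring
      · rw [hu_succ m]
  obtain ⟨L, -, hL⟩ := exists_hasLimit hcomp hΔ hstep
  have hLball : (ρ : EReal) ≤ v.w (L - c₀) := by
    simpa [u, w_sub_comm] using hL 0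
  refine ⟨L, hLball, sub_eq_zero.mp ?_⟩
  refine eq_zero_of_forall_nat_coe_le_w (v := v) (ρ := ρ + Δ) hΔ fun m => ?_
  rw [← sub_add_sub_cancel (T L) (u (m + 1)) L, hu_succ]
  refine le_w_add ?_ ?_
  · convert hcontr L (u m) _ hLball (hball m) (by rw [w_sub_comm]; exact hL m) using 2
    ring
  · rw [← hu_succ]
    convert hL (m + 1) using 2
    push_cast
    ring

end Limits

section Series

variable {a b : ℕ → K} {s t : K}

theorem SumsTo.unique (h : v.SumsTo a s) (h' : v.SumsTo a t) : s = t := HasLimit.unique h h'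

theorem SumsTo.add (h : v.SumsTo a s) (h' : v.SumsTo b t) :
    v.SumsTo (fun k => a k + b k) (s + t) := by
  simpa only [SumsTo, Finset.sum_add_distrib] using HasLimit.add h h'

theorem SumsTo.sub (h : v.SumsTo a s) (h' : v.SumsTo b t) :
    v.SumsTo (fun k => a k - b k) (s - t) := by
  simpa only [SumsTo, Finset.sum_sub_distrib] using HasLimit.sub h h'

theorem SumsTo.const_mul (c : K) (h : v.SumsTo a s) : v.SumsTo (fun k => c * a k) (c * s) := by
  simpa only [SumsTo, Finset.mul_sum] using HasLimit.const_mul c h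

theorem sumsTo_single (j : ℕ) (x : K) : v.SumsTo (Pi.single j x) x :=
  hasLimit_of_eventually_eq (N := j + 1) fun n hn => by
    simp [Finset.sum_pi_single', Nat.lt_of_succ_le hn]

theorem SumsTo.coe_le_w {B : ℝ} (h : v.SumsTo a s) (hB : ∀ k, (B : EReal) ≤ v.w (a k)) :
    (B : EReal) ≤ v.w s :=
  HasLimit.coe_le_w (N := 0) h fun _ _ => le_w_sum fun k _ => hB k

theorem exists_sumsTo (hcomp : v.IsComplete) {C θ : ℝ} (hθ : 0 < θ)
    (ha : ∀ k : ℕ, ((C + k * θ : ℝ) : EReal) ≤ v.w (a k)) :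
    ∃ s, v.SumsTo a s ∧
      ∀ N : ℕ, ((C + N * θ : ℝ) : EReal) ≤ v.w (∑ k ∈ Finset.range N, a k - s) := by
  refine exists_hasLimit hcomp hθ fun m => ?_
  rw [Finset.sum_range_succ_sub_sum]
  exact ha m

end Series

section PowerSeries

theorem w_coe_nonneg (x : v.subring) : 0 ≤ v.w (x : K) := x.2

theorem exists_coe_le_w_of_pos {x : K} (hx : 0 < v.w x) :
    ∃ θ : ℝ, 0 < θ ∧ (θ : EReal) ≤ v.w x := by
  obtain ⟨θ, h0, hθ⟩ := EReal.exists_between_coe_real hx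
  exact ⟨θ, EReal.coe_pos.mp h0, hθ.le⟩

theorem sumsTo_coeff_X_sub_C_mul_add_C {c : v.subring} (hc : 0 < v.w c)
    (q : PowerSeries v.subring) (r : v.subring) :
    v.SumsTo (fun i => ((coeff i ((X - C c) * q + C r) : v.subring) : K) * (c : K) ^ i) r := by
  obtain ⟨θ, hθ, hcθ⟩ := exists_coe_le_w_of_pos hc
  refine hasLimit_of_coe_le_w (ρ := 0) hθ fun m => ?_
  rcases m with _ | N
  · simpa [w_neg] using w_coe_nonneg r
  have h := congrArg Subtype.val (PowerSeries.sum_coeff_X_sub_C_mul_add_C_mul_pow c r q N)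
  push_cast at h
  simp only [h, sub_sub_cancel_left, w_neg]
  simpa using coe_le_w_mul (w_coe_nonneg (coeff N q)) (coe_le_w_pow hcθ (N + 1))

theorem exists_eq_X_sub_C_mul_add_C (hcomp : v.IsComplete) (f : PowerSeries v.subring)
    {c : v.subring} (hc : 0 < v.w c) :
    ∃ (q : PowerSeries v.subring) (r : v.subring), f = (X - C c) * q + C r := by
  rcases eq_or_ne c 0 with rfl | hc0
  · exact ⟨_, _, by simpa using eq_X_mul_shift_add_const f⟩
  obtain ⟨θ, hθ⟩ := v.finite' (c : K) (by exact_mod_cast hc0)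
  have hθ0 : 0 < θ := EReal.coe_pos.mp (hθ ▸ hc)
  set S : ℕ → K := fun N => ∑ k ∈ Finset.range N, ((coeff k f : v.subring) : K) * (c : K) ^ k
  obtain ⟨s, -, hs⟩ : ∃ s, v.SumsTo _ s ∧ ∀ N : ℕ, ((0 + N * θ : ℝ) : EReal) ≤ v.w (S N - s) :=
    exists_sumsTo hcomp hθ0
      fun k => by simpa using coe_le_w_mul (w_coe_nonneg (coeff k f)) (w_pow_eq hθ k).ge
  -- The quotient has coefficients `(f(c) - Sᵢ₊₁) / cⁱ⁺¹`, integral since the tail of `f(c)` after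
  -- `i + 1` terms has valuation at least `(i + 1) θ`.
  have hq : ∀ i : ℕ, 0 ≤ v.w ((s - S (i + 1)) / (c : K) ^ (i + 1)) := fun i => by
    rw [← neg_sub, neg_div, w_neg]
    simpa using coe_le_w_div (hs (i + 1)) (w_pow_eq hθ (i + 1))
  have hs0 : 0 ≤ v.w s := by simpa [S, w_neg] using hs 0
  refine ⟨PowerSeries.mk fun i => ⟨_, hq i⟩, ⟨s, hs0⟩, ?_⟩
  have hc0' : (c : K) ≠ 0 := by exact_mod_cast hc0
  ext (_ | i)
  · rw [coeff_zero_X_sub_C_mul_add_C, coeff_mk]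
    push_cast
    field_simp
    simp [S]
  · rw [coeff_succ_X_sub_C_mul_add_C, coeff_mk, coeff_mk]
    push_cast
    rw [show S (i + 1 + 1) = S (i + 1) + ((coeff (i + 1) f : v.subring) : K) * (c : K) ^ (i + 1)
      from Finset.sum_range_succ _ _]
    field_simp
    ring

theorem X_sub_C_dvd_of_sumsTo_zero (hcomp : v.IsComplete) {f : PowerSeries v.subring}
    {c : v.subring} (hc : 0 < v.w c)
    (hf : v.SumsTo (fun i => ((coeff i f : v.subring) : K) * (c : K) ^ i) 0) : X - C c ∣ f := by
  obtain ⟨q, r, rfl⟩ := exists_eq_X_sub_C_mul_add_C hcomp f hc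
  obtain rfl : r = 0 := Subtype.ext ((sumsTo_coeff_X_sub_C_mul_add_C hc q r).unique hf)
  simp

theorem eq_zero_of_X_sub_C_dvd_C {c r : v.subring} (hc : 0 < v.w c) (h : X - C c ∣ C r) :
    r = 0 := by
  obtain ⟨q, hq⟩ := h
  have h0 := sumsTo_coeff_X_sub_C_mul_add_C hc q 0
  have hr := sumsTo_coeff_X_sub_C_mul_add_C hc 0 r
  rw [map_zero, add_zero, ← hq] at h0
  rw [mul_zero, zero_add] at hr
  exact Subtype.ext (hr.unique h0)

theorem not_isUnit_of_pos {c : v.subring} (hc : 0 < v.w c) : ¬ IsUnit c := fun h => by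
  obtain ⟨d, hd⟩ := h.exists_right_inv
  have h1 : v.w (c : K) + v.w (d : K) = 0 := by
    rw [← v.map_mul', ← v.map_one']
    exact congrArg (fun x : v.subring => v.w x) hd
  exact (hc.trans_le (le_add_of_nonneg_right (w_coe_nonneg d))).ne' h1

theorem X_sub_C_ne_zero (c : v.subring) : (X - C c : PowerSeries v.subring) ≠ 0 := fun h => by
  simpa using congrArg (coeff 1) h

theorem prime_X_sub_C (hcomp : v.IsComplete) {c : v.subring} (hc : 0 < v.w c) :
    Prime (X - C c : PowerSeries v.subring) := by
  refine ⟨X_sub_C_ne_zero c, fun h => not_isUnit_of_pos hc ?_, fun f g hfg => ?_⟩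
  · simpa using (isUnit_constantCoeff _ h).neg
  obtain ⟨q, r, rfl⟩ := exists_eq_X_sub_C_mul_add_C hcomp f hc
  obtain ⟨q', r', rfl⟩ := exists_eq_X_sub_C_mul_add_C hcomp g hc
  have hrr' : X - C c ∣ C (r * r') := by
    have : ((X - C c) * q + C r) * ((X - C c) * q' + C r')
        = (X - C c) * (q * ((X - C c) * q' + C r') + C r * q') + C (r * r') := by
      rw [map_mul]; ring
    rw [this] at hfg
    exact (dvd_add_right (dvd_mul_right _ _)).mp hfg
  rcases mul_eq_zero.mp (eq_zero_of_X_sub_C_dvd_C hc hrr') with rfl | rfl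
  · exact Or.inl (by simp)
  · exact Or.inr (by simp)

theorem eq_of_X_sub_C_dvd {a b : v.subring} (ha : 0 < v.w a) (h : X - C a ∣ X - C b) :
    a = b := by
  have : X - C b = (X - C a) + C (a - b) := by rw [map_sub]; ring
  rw [this, dvd_add_right dvd_rfl] at h
  exact sub_eq_zero.mp (eq_zero_of_X_sub_C_dvd_C ha h)

end PowerSeries

section NewtonSegment

variable {a : ℕ → K} {n : ℕ} {μ θ Δ : ℝ}

/-- The terms of `∑ₖ a k cᵏ / (a (n + 1) cⁿ)` other than those of index `n` and `n + 1`. -/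
noncomputable def offSegment (a : ℕ → K) (n : ℕ) (c : K) (k : ℕ) : K :=
  if k = n ∨ k = n + 1 then 0 else a k / a (n + 1) * c ^ ((k : ℤ) - n)

theorem coe_le_w_offSegment_of_nonneg (ha : ∀ k, 0 ≤ v.w (a k))
    (hn1 : v.w (a (n + 1)) = (μ - (n + 1) * θ : ℝ)) {c : K} (hc : v.w c = θ) (k : ℕ) :
    ((θ - μ + k * θ : ℝ) : EReal) ≤ v.w (offSegment a n c k) := by
  unfold offSegment
  split_ifs
  · simp [v.map_zero']
  convert coe_le_w_mul (coe_le_w_div (ha k) hn1) (w_zpow_eq hc _).ge using 2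
  push_cast
  ring

theorem coe_le_w_div_of_ne (hn1 : v.w (a (n + 1)) = (μ - (n + 1) * θ : ℝ))
    (hk : ∀ k, k ≠ n → k ≠ n + 1 → ((μ + Δ - k * θ : ℝ) : EReal) ≤ v.w (a k))
    {k : ℕ} (hkn : k ≠ n) (hkn1 : k ≠ n + 1) :
    ((Δ - ((k : ℤ) - n - 1 : ℤ) * θ : ℝ) : EReal) ≤ v.w (a k / a (n + 1)) := by
  convert coe_le_w_div (hk k hkn hkn1) hn1 using 2
  push_cast
  ring

theorem coe_le_w_offSegment (hn1 : v.w (a (n + 1)) = (μ - (n + 1) * θ : ℝ))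
    (hk : ∀ k, k ≠ n → k ≠ n + 1 → ((μ + Δ - k * θ : ℝ) : EReal) ≤ v.w (a k))
    {c : K} (hc : v.w c = θ) (k : ℕ) :
    ((θ + Δ : ℝ) : EReal) ≤ v.w (offSegment a n c k) := by
  unfold offSegment
  split_ifs with hkn
  · simp [v.map_zero']
  obtain ⟨hkn, hkn1⟩ := not_or.mp hkn
  convert coe_le_w_mul (coe_le_w_div_of_ne hn1 hk hkn hkn1) (w_zpow_eq hc _).ge using 2
  push_cast
  ring

theorem coe_le_w_offSegment_sub (hn1 : v.w (a (n + 1)) = (μ - (n + 1) * θ : ℝ))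
    (hk : ∀ k, k ≠ n → k ≠ n + 1 → ((μ + Δ - k * θ : ℝ) : EReal) ≤ v.w (a k))
    {c c' : K} (hc : v.w c = θ) (hc' : v.w c' = θ) {r : ℝ} (h : (r : EReal) ≤ v.w (c - c'))
    (k : ℕ) : ((r + Δ : ℝ) : EReal) ≤ v.w (offSegment a n c k - offSegment a n c' k) := by
  unfold offSegment
  split_ifs with hkn
  · simp [v.map_zero']
  obtain ⟨hkn, hkn1⟩ := not_or.mp hkn
  rw [← mul_sub]
  convert coe_le_w_mul (coe_le_w_div_of_ne hn1 hk hkn hkn1)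
    (coe_le_w_zpow_sub_zpow hc hc' h ((k : ℤ) - n)) using 2
  push_cast
  ring

theorem mul_pow_eq_offSegment_add (hd : a (n + 1) ≠ 0) {c : K} (hc : c ≠ 0) (k : ℕ) :
    a k * c ^ k = a (n + 1) * c ^ n *
      (offSegment a n c k + (Pi.single n (a n / a (n + 1)) : ℕ → K) k
        + (Pi.single (n + 1) c : ℕ → K) k) := by
  unfold offSegment
  by_cases hkn : k = n
  · subst hkn
    rw [if_pos (Or.inl rfl), Pi.single_eq_same, Pi.single_eq_of_ne (Nat.succ_ne_self k).symm]
    field_simp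
    ring
  by_cases hkn1 : k = n + 1
  · subst hkn1
    rw [if_pos (Or.inr rfl), Pi.single_eq_same, Pi.single_eq_of_ne (Nat.succ_ne_self n)]
    ring
  simp only [hkn, hkn1, or_self, if_false, Pi.single_apply, add_zero,
    zpow_sub₀ hc, zpow_natCast]
  field_simp

/-- The hypotheses say that `[n, n + 1]` is a side of slope `-θ` of the Newton polygon of `a`,
all other points lying at least `Δ` above its line. The root is the fixed point of the
`Δ`-contraction `c ↦ -(a n + ∑_{k ≠ n, n + 1} a k c^(k - n)) / a (n + 1)`. -/
theorem exists_root_of_newtonSegment (hcomp : v.IsComplete) (ha : ∀ k, 0 ≤ v.w (a k))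
    (hθ : 0 < θ) (hΔ : 0 < Δ) (hn : v.w (a n) = (μ - n * θ : ℝ))
    (hn1 : v.w (a (n + 1)) = (μ - (n + 1) * θ : ℝ))
    (hk : ∀ k, k ≠ n → k ≠ n + 1 → ((μ + Δ - k * θ : ℝ) : EReal) ≤ v.w (a k)) :
    ∃ c, v.w c = θ ∧ v.SumsTo (fun k => a k * c ^ k) 0 := by
  set c₀ := -(a n / a (n + 1))
  have hc₀ : v.w c₀ = θ := by
    rw [w_neg, w_div_eq hn hn1]
    congr 1
    ring
  have hsphere : ∀ c, ((θ + Δ : ℝ) : EReal) ≤ v.w (c - c₀) → v.w c = θ := fun c h =>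
    w_eq_of_lt_w_sub hc₀ ((EReal.coe_lt_coe_iff.mpr (by linarith)).trans_le h)
  choose! U hU using fun c (hc : v.w c = θ) =>
    (exists_sumsTo hcomp hθ (coe_le_w_offSegment_of_nonneg ha hn1 hc)).imp fun _ h => h.1
  obtain ⟨c, hc, hfix⟩ := exists_fixedPoint hcomp (T := fun c => c₀ - U c) (c₀ := c₀) hΔ
    (fun c h => by
      rw [sub_sub_cancel_left, w_neg]
      exact (hU c (hsphere c h)).coe_le_w (coe_le_w_offSegment hn1 hk (hsphere c h)))
    (fun c c' r h h' hcc' => by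
      rw [sub_sub_sub_cancel_left, w_sub_comm]
      exact ((hU c (hsphere c h)).sub (hU c' (hsphere c' h'))).coe_le_w
        (coe_le_w_offSegment_sub hn1 hk (hsphere c h) (hsphere c' h') hcc'))
  have hcθ := hsphere c hc
  refine ⟨c, hcθ, ?_⟩
  convert (((hU c hcθ).add (sumsTo_single n (a n / a (n + 1)))).add
    (sumsTo_single (n + 1) c)).const_mul (a (n + 1) * c ^ n) using 1
  · exact funext (mul_pow_eq_offSegment_add (ne_zero_of_w_eq hn1) (ne_zero_of_w_eq hcθ))
  · linear_combination (a (n + 1) * c ^ n) * hfix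

end NewtonSegment

end AddRealValuation

/-- The Newton polygon gap for the heights `-∑_{j<k} ε (j + 1)`: the points of index
`k ≠ n, n + 1` lie at least `ε (n + 2)` above the line through those of index `n` and
`n + 1`. -/
theorem sum_range_sub_add_le_of_halving {ε : ℕ → ℝ} (hε : ∀ n, 0 < ε n)
    (hhalf : ∀ n, ε (n + 1) ≤ ε n / 2) {n k : ℕ} (hkn : k ≠ n) (hkn1 : k ≠ n + 1) :
    ∑ j ∈ Finset.range k, (ε (j + 1) - ε (n + 1)) + ε (n + 2)
      ≤ ∑ j ∈ Finset.range n, (ε (j + 1) - ε (n + 1)) := by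
  have hanti : Antitone ε := antitone_nat_of_succ_le fun n => by linarith [hhalf n, hε n]
  rcases lt_or_gt_of_ne hkn with hlt | hgt
  · rw [← Finset.sum_range_add_sum_Ico _ hlt.le, add_le_add_iff_left]
    have hmem : n - 1 ∈ Finset.Ico k n := Finset.mem_Ico.mpr ⟨by omega, by omega⟩
    refine le_trans ?_ (Finset.single_le_sum (fun j hj => ?_) hmem)
    · rw [Nat.sub_add_cancel (by omega)]
      linarith [hhalf n, hhalf (n + 1), hε (n + 2)]
    · linarith [hanti (show j + 1 ≤ n + 1 by have := (Finset.mem_Ico.mp hj).2; omega)]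
  · rw [← Finset.sum_range_add_sum_Ico _ (show n ≤ k by omega), add_assoc,
      add_le_iff_nonpos_right, ← le_neg_iff_add_nonpos_left, ← Finset.sum_neg_distrib]
    have hmem : n + 1 ∈ Finset.Ico n k := Finset.mem_Ico.mpr ⟨by omega, by omega⟩
    refine le_trans ?_ (Finset.single_le_sum (fun j hj => ?_) hmem)
    · linarith [hhalf (n + 1)]
    · linarith [hanti (show n + 1 ≤ j + 1 by have := (Finset.mem_Ico.mp hj).1; omega)]

namespace AddRealValuation

variable {K : Type*} [Field K] {v : AddRealValuation K}

section Construction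

theorem exists_halving_seq (hnd : v.Nondiscrete) :
    ∃ (s : ℕ → K) (ε : ℕ → ℝ), (∀ n, 0 < ε n) ∧ (∀ n, ε (n + 1) ≤ ε n / 2) ∧
      ∀ n, v.w (s n) = ε n := by
  have h : ∀ β : ℝ, 0 < β → ∃ (x : K) (r : ℝ), 0 < r ∧ r ≤ β / 2 ∧ v.w x = r := by
    intro β hβ
    obtain ⟨x, hx0, hxβ⟩ := hnd (β / 2) (by positivity)
    obtain ⟨r, hr⟩ := v.finite' x fun h => by simp [h, v.map_zero'] at hxβ
    rw [hr, EReal.coe_pos] at hx0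
    rw [hr, EReal.coe_lt_coe_iff] at hxβ
    exact ⟨x, r, hx0, hxβ.le, hr⟩
  choose! x r hr0 hrβ hxr using h
  have hβ : ∀ n, 0 < r^[n] 1 := by
    intro n
    induction n with
    | zero => exact one_pos
    | succ n ih => rw [Function.iterate_succ_apply']; exact hr0 _ ih
  refine ⟨fun n => x (r^[n] 1), fun n => r^[n + 1] 1, fun n => hβ (n + 1), fun n => ?_,
    fun n => ?_⟩
  · show r^[n + 1 + 1] 1 ≤ r^[n + 1] 1 / 2
    rw [Function.iterate_succ_apply']
    exact hrβ _ (hβ (n + 1))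
  · show v.w (x (r^[n] 1)) = (r^[n + 1] 1 : ℝ)
    rw [Function.iterate_succ_apply']
    exact hxr _ (hβ n)

/-- The `k`-th coefficient is `s₀² / (s₁ ⋯ sₖ)` for elements `sⱼ` of valuations `εⱼ` with
`εⱼ₊₁ ≤ εⱼ / 2`, so the Newton polygon has a side of slope `-εₙ₊₁` for every `n`:
non-discreteness is what provides infinitely many distinct slopes. -/
theorem exists_series_with_roots (hcomp : v.IsComplete) (hnd : v.Nondiscrete) :
    ∃ (b : ℕ → K) (ε : ℕ → ℝ), b 0 ≠ 0 ∧ (∀ k, 0 ≤ v.w (b k)) ∧ StrictAnti ε ∧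
      ∀ n, 0 < ε n ∧ ∃ c, v.w c = ε n ∧ v.SumsTo (fun k => b k * c ^ k) 0 := by
  obtain ⟨s, ε, hε, hhalf, hs⟩ := exists_halving_seq hnd
  set ν : ℕ → ℝ := fun k => 2 * ε 0 - ∑ j ∈ Finset.range k, ε (j + 1)
  set b : ℕ → K := fun k => s 0 * s 0 / ∏ j ∈ Finset.range k, s (j + 1)
  have hb : ∀ k, v.w (b k) = ν k := fun k => by
    rw [w_div_eq (w_mul_eq (hs 0) (hs 0)) (w_prod_eq fun j _ => hs (j + 1))]
    congr 1
    ring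
  have hsum : ∀ k, ∑ j ∈ Finset.range k, ε (j + 1) ≤ ε 0 - ε k := by
    intro k
    induction k with
    | zero => simp
    | succ k ih => rw [Finset.sum_range_succ]; linarith [hhalf k]
  have hb0 : ∀ k, 0 ≤ v.w (b k) := fun k => by
    rw [hb]
    exact EReal.coe_nonneg.mpr (by linarith [hsum k, hε 0, hε k])
  refine ⟨b, fun n => ε (n + 1), ne_zero_of_w_eq (hb 0), hb0,
    (strictAnti_nat_of_succ_lt fun n => by linarith [hhalf n, hε n]).comp_strictMono
      (strictMono_id.add_const 1), fun n => ⟨hε (n + 1), ?_⟩⟩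
  refine exists_root_of_newtonSegment hcomp hb0 (hε (n + 1)) (hε (n + 2))
    (μ := ν n + n * ε (n + 1)) (by rw [hb]; congr 1; ring)
    (by rw [hb]; congr 1; simp only [ν, Finset.sum_range_succ]; ring)
    fun k hkn hkn1 => (hb k).symm ▸ EReal.coe_le_coe_iff.mpr ?_
  have := sum_range_sub_add_le_of_halving hε hhalf hkn hkn1
  simp only [Finset.sum_sub_distrib, Finset.sum_const, Finset.card_range, nsmul_eq_mul] at this
  linarith

theorem exists_powerSeries_with_roots (hcomp : v.IsComplete) (hnd : v.Nondiscrete) :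
    ∃ f : PowerSeries v.subring, f ≠ 0 ∧ ∃ c : ℕ → v.subring, Function.Injective c ∧
      ∀ n, 0 < v.w (c n) ∧ X - C (c n) ∣ f := by
  obtain ⟨b, ε, hb0, hb, hε, hroot⟩ := exists_series_with_roots hcomp hnd
  choose hεpos c hc hcroot using hroot
  have hcpos : ∀ n, 0 < v.w (c n) := fun n => hc n ▸ EReal.coe_pos.mpr (hεpos n)
  refine ⟨PowerSeries.mk fun k => ⟨b k, hb k⟩, fun h => hb0 ?_, fun n => ⟨c n, (hcpos n).le⟩,
    fun m n hmn => hε.injective ?_,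
    fun n => ⟨hcpos n, X_sub_C_dvd_of_sumsTo_zero hcomp (hcpos n) ?_⟩⟩
  · simpa using congrArg (fun f : PowerSeries v.subring => ((coeff 0 f : v.subring) : K)) h
  · simpa [hc] using congrArg (fun x : v.subring => v.w x) hmn
  · simpa using hcroot n

end Construction

end AddRealValuation

namespace IsGKFamily

open AddRealValuation

variable {D : Type*} [CommRing D] [IsDomain D] {F : Type*} [Field F] [Algebra D F]
  [IsFractionRing D F] {𝓕 : Set (AddRealValuation F)}

theorem nonneg (h : IsGKFamily D F 𝓕) {u : AddRealValuation F} (hu : u ∈ 𝓕) (d : D) :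
    0 ≤ u.w (algebraMap D F d) := by
  obtain ⟨-, b, hb, hbu, -⟩ := (h.1 u hu 1).mp (by rw [u.map_one'])
  exact (h.1 u hu _).mpr ⟨d * b, b, hb, hbu, by rw [map_mul]⟩

theorem exists_pos (h : IsGKFamily D F 𝓕) {a : D} (ha0 : a ≠ 0) (ha : ¬ IsUnit a) :
    ∃ u ∈ 𝓕, 0 < u.w (algebraMap D F a) := by
  by_contra! hle
  have ha0' : algebraMap D F a ≠ 0 := (map_ne_zero_iff _ (IsFractionRing.injective D F)).mpr ha0
  obtain ⟨d, hd⟩ := h.2.1 (algebraMap D F a)⁻¹ fun u hu => by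
    obtain ⟨r, hr⟩ := u.finite' _ ha0'
    have := hle u hu
    rw [hr, ← EReal.coe_zero, EReal.coe_le_coe_iff] at this
    rw [w_inv_eq hr]
    exact EReal.coe_nonneg.mpr (by linarith)
  refine ha (.of_mul_eq_one d (IsFractionRing.injective D F ?_))
  rw [map_mul, ← hd, mul_inv_cancel₀ ha0', map_one]

/-- This is where rank one is used: `u (pᵏ / q) ≥ 0` for large `k`, and condition (a) then
forces `q ∣ p`. -/
theorem dvd_of_pos (h : IsGKFamily D F 𝓕) {u : AddRealValuation F} (hu : u ∈ 𝓕) {p q : D}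
    (hq : Prime q) (hpu : 0 < u.w (algebraMap D F p)) (hqu : 0 < u.w (algebraMap D F q)) :
    q ∣ p := by
  rcases eq_or_ne p 0 with rfl | hp0
  · exact dvd_zero q
  have hinj := IsFractionRing.injective D F
  obtain ⟨r, hr⟩ := u.finite' _ ((map_ne_zero_iff _ hinj).mpr hp0)
  obtain ⟨s, hs⟩ := u.finite' _ ((map_ne_zero_iff _ hinj).mpr hq.ne_zero)
  have hr0 : 0 < r := EReal.coe_pos.mp (hr ▸ hpu)
  obtain ⟨k, hk⟩ := exists_nat_ge (s / r)
  rw [div_le_iff₀ hr0] at hk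
  have hx : 0 ≤ u.w (algebraMap D F (p ^ k) / algebraMap D F q) := by
    rw [w_div_eq (map_pow (algebraMap D F) p k ▸ w_pow_eq hr k) hs]
    exact EReal.coe_nonneg.mpr (by linarith)
  obtain ⟨a, b, -, hbu, hab⟩ := (h.1 u hu _).mp hx
  have hpb : p ^ k * b = q * a := hinj <| by
    rw [map_mul, map_mul, ← hab]
    field_simp [(map_ne_zero_iff _ hinj).mpr hq.ne_zero]
  rcases hq.dvd_or_dvd (Dvd.intro a hpb.symm) with hdvd | ⟨e, rfl⟩
  · exact hq.dvd_of_dvd_pow hdvd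
  · refine absurd ?_ hbu
    rw [map_mul, u.map_mul']
    exact hqu.trans_le (le_add_of_nonneg_right (h.nonneg hu e))

theorem exists_not_dvd (h : IsGKFamily D F 𝓕) {f : D} (hf : f ≠ 0) {π : ℕ → D}
    (hπ : ∀ n, Prime (π n)) (hπ' : Pairwise fun m n => ¬ Associated (π m) (π n)) :
    ∃ n, ¬ π n ∣ f := by
  by_contra! hdvd
  choose u hu hpos using fun n => h.exists_pos (hπ n).ne_zero (hπ n).not_isUnit
  have hinj : Function.Injective u := fun m n hmn => by
    by_contra hne
    exact hπ' hne ((hπ m).associated_of_dvd (hπ n)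
      (h.dvd_of_pos (hu n) (hπ m) (hpos n) (hmn ▸ hpos m)))
  refine Set.infinite_of_injective_forall_mem
    (s := {u ∈ 𝓕 | u.w (algebraMap D F f) ≠ 0}) hinj (fun n => ⟨hu n, ?_⟩) (h.2.2 f hf)
  obtain ⟨g, rfl⟩ := hdvd n
  rw [map_mul, (u n).map_mul']
  exact ((hpos n).trans_le (le_add_of_nonneg_right (h.nonneg (hu n) g))).ne'

end IsGKFamily

/-- Let `K` be a field complete with respect to a non-discrete rank-1
valuation, with valuation ring `R`. Then `R[[X]]` is not a generalized Krull domain: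
no family of rank-1 valuations of `Quot(R[[X]])` satisfies the generalized Krull
conditions for `R[[X]]`. -/
theorem statement13 {K : Type*} [Field K] (v : AddRealValuation K)
    (hcomp : v.IsComplete) (hnd : v.Nondiscrete) :
    ¬ ∃ 𝓕 : Set (AddRealValuation (FractionRing (PowerSeries v.subring))),
      IsGKFamily (PowerSeries v.subring) (FractionRing (PowerSeries v.subring)) 𝓕 := by
  rintro ⟨𝓕, h𝓕⟩
  obtain ⟨f, hf, c, hc_inj, hc⟩ := AddRealValuation.exists_powerSeries_with_roots hcomp hnd
  obtain ⟨n, hn⟩ := h𝓕.exists_not_dvd hf (fun n => AddRealValuation.prime_X_sub_C hcomp (hc n).1)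
    fun m n hmn hassoc => hmn (hc_inj (AddRealValuation.eq_of_X_sub_C_dvd (hc m).1 hassoc.dvd))
  exact hn (hc n).2
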